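/- arXiv:1705.02766 — 2 statements merged into one kernel-verified Lean document; each statement's English description precedes it below -/
import Mathlib

section
/- Let f : ℝ^d → ℝ be differentiable with L-Lipschitz gradient, let 0 < σ ≤ L, set κ = L/σ and ω = (√κ − 1)/(√κ + 1), and define iterates by x₀ = y₀ and, for t ≥ 1, y_t = x_{t−1} − (1/L)∇f(x_{t−1}) and x_t = y_t + ω(y_t − y_{t−1}). Fix w ∈ ℝ^d and t ≥ 1. If f(y_t) − f(w) > (1 − 1/√κ)^t · ψ(w), where ψ(w) = f(y₀) − f(w) + (σ/2)‖w − y₀‖², then there exist s ∈ {0, 1, …, t−1} and a point u ∈ {y_s, w} such that f(u) < f(x_s) + ∇f(x_s)ᵀ(u − x_s) + (σ/2)‖u − x_s‖², i.e., the pair (u, x_s) witnesses that f is not σ-strongly convex. -/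
/-!
With `r = √κ` and `v = (1 + r) x - r y`, the potential `f y - f w + (σ/2) ‖v - w‖²` contracts by
the factor `1 - 1/r` along each AGD step, provided the two strong convexity inequalities at `x`
towards `y` and towards `w` hold; the only other ingredient is the descent lemma for the gradient
step. The potential starts at `ψ(w)` and dominates `f (y t) - f w`, so slow progress forces one
of those inequalities to fail at some step `s < t`.
-/

open scoped InnerProductSpace

section Smooth

variable {E : Type*} [NormedAddCommGroup E] [InnerProductSpace ℝ E] [CompleteSpace E]

theorem HasGradientAt.hasDerivAt_comp_add_smul {f : E → ℝ} {f' u h : E} {θ : ℝ}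
    (hf : HasGradientAt f f' (u + θ • h)) :
    HasDerivAt (fun θ : ℝ => f (u + θ • h)) ⟪f', h⟫_ℝ θ := by
  have hline : HasDerivAt (fun θ : ℝ => u + θ • h) h θ := by
    simpa using ((hasDerivAt_id θ).smul_const h).const_add u
  have hcomp := hf.hasFDerivAt.comp_hasDerivAt θ hline
  simp only [Function.comp_def, InnerProductSpace.toDual_apply_apply] at hcomp
  exact hcomp

variable {f : E → ℝ} {g : E → E} {L : ℝ}

theorem le_add_inner_add_sq_of_lipschitz_gradient (hgrad : ∀ x, HasGradientAt f (g x) x)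
    (hlip : ∀ x y, ‖g x - g y‖ ≤ L * ‖x - y‖) (u h : E) :
    f (u + h) ≤ f u + ⟪g u, h⟫_ℝ + L / 2 * ‖h‖ ^ 2 := by
  set c := ⟪g u, h⟫_ℝ
  let φ : ℝ → ℝ := fun θ => f (u + θ • h) - θ * c - θ ^ 2 * (L / 2 * ‖h‖ ^ 2)
  have hφ (θ : ℝ) : HasDerivAt φ (⟪g (u + θ • h), h⟫_ℝ - c - θ * (L * ‖h‖ ^ 2)) θ := by
    have hlin : HasDerivAt (fun θ : ℝ => θ * c) c θ := by
      simpa using (hasDerivAt_id θ).mul_const c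
    have hquad : HasDerivAt (fun θ : ℝ => θ ^ 2 * (L / 2 * ‖h‖ ^ 2)) (θ * (L * ‖h‖ ^ 2)) θ := by
      refine ((hasDerivAt_pow 2 θ).mul_const (L / 2 * ‖h‖ ^ 2)).congr_deriv ?_
      push_cast; ring
    exact ((hgrad _).hasDerivAt_comp_add_smul.sub hlin).sub hquad
  have hφ_nonpos (θ : ℝ) (hθ : 0 < θ) : ⟪g (u + θ • h), h⟫_ℝ - c - θ * (L * ‖h‖ ^ 2) ≤ 0 :=
    sub_nonpos.2 <|
      calc ⟪g (u + θ • h), h⟫_ℝ - c = ⟪g (u + θ • h) - g u, h⟫_ℝ := (inner_sub_left ..).symm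
        _ ≤ ‖g (u + θ • h) - g u‖ * ‖h‖ := real_inner_le_norm _ _
        _ ≤ L * ‖θ • h‖ * ‖h‖ := by gcongr; simpa using hlip (u + θ • h) u
        _ = θ * (L * ‖h‖ ^ 2) := by rw [norm_smul, Real.norm_of_nonneg hθ.le]; ring
  have hanti : AntitoneOn φ (Set.Ici 0) :=
    antitoneOn_of_hasDerivWithinAt_nonpos (convex_Ici 0)
      (fun θ _ => (hφ θ).continuousAt.continuousWithinAt) (fun θ _ => (hφ θ).hasDerivWithinAt)
      (fun θ hθ => hφ_nonpos θ (by simpa using hθ))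
  have h10 : φ 1 ≤ φ 0 := hanti Set.self_mem_Ici (Set.mem_Ici.2 zero_le_one) zero_le_one
  simp only [φ, one_smul, one_mul, one_pow, zero_smul, add_zero, zero_mul, sub_zero, ne_eq,
    OfNat.ofNat_ne_zero, not_false_eq_true, zero_pow] at h10
  linarith

theorem gradient_step_le (hgrad : ∀ x, HasGradientAt f (g x) x)
    (hlip : ∀ x y, ‖g x - g y‖ ≤ L * ‖x - y‖) (u : E) :
    f (u - (1 / L) • g u) ≤ f u - 1 / (2 * L) * ‖g u‖ ^ 2 := by
  have := le_add_inner_add_sq_of_lipschitz_gradient hgrad hlip u (-((1 / L) • g u))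
  rw [← sub_eq_add_neg, inner_neg_right, norm_neg, real_inner_smul_right,
    real_inner_self_eq_norm_sq, norm_smul, Real.norm_eq_abs, mul_pow, sq_abs] at this
  convert this using 1
  rcases eq_or_ne L 0 with rfl | hL
  · simp
  · field_simp; ring

end Smooth

section Potential

variable {E : Type*} [NormedAddCommGroup E] [InnerProductSpace ℝ E]

theorem norm_one_sub_smul_add_smul_sq (a b : E) (τ : ℝ) :
    ‖(1 - τ) • a + τ • b‖ ^ 2 =
      (1 - τ) * ‖a‖ ^ 2 + τ * ‖b‖ ^ 2 - τ * (1 - τ) * ‖a - b‖ ^ 2 := by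
  rw [norm_add_sq_real, norm_sub_sq_real, norm_smul, norm_smul, real_inner_smul_left,
    real_inner_smul_right, mul_pow, mul_pow, Real.norm_eq_abs, Real.norm_eq_abs, sq_abs, sq_abs]
  ring

noncomputable def agdPotential (f : E → ℝ) (σ r : ℝ) (w x y : E) : ℝ :=
  f y - f w + σ / 2 * ‖(1 + r) • x - r • y - w‖ ^ 2

variable {σ r L : ℝ}

/- With `p = y - x`, `q = w - x` and `v = (1 + r) x - r y`, the vectors `q + r • p` and
`q + (r - 1) • p + (1 / (σ r)) • G` are `w - v` before and after an AGD step, and the second is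
`(1 - 1/r) (w - v) + (1/r) (w - x) + G / (σ r)`. -/
theorem half_norm_sq_agd_step_eq (hσ : 0 < σ) (hr : 0 < r) (hL : L = σ * r ^ 2) (p q G : E) :
    σ / 2 * ‖q + (r - 1) • p + (1 / (σ * r)) • G‖ ^ 2 =
      (1 - 1 / r) * (σ / 2 * ‖q + r • p‖ ^ 2) + 1 / r * (σ / 2 * ‖q‖ ^ 2)
        - σ / 2 * (r - 1) * ‖p‖ ^ 2
        + 1 / r * ⟪G, q⟫_ℝ + (1 - 1 / r) * ⟪G, p⟫_ℝ + 1 / (2 * L) * ‖G‖ ^ 2 := by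
  have hconv : q + (r - 1) • p = (1 - 1 / r) • (q + r • p) + (1 / r) • q := by
    match_scalars <;> field_simp
    ring
  rw [norm_add_sq_real, hconv, norm_one_sub_smul_add_smul_sq, ← hconv, add_sub_cancel_left,
    inner_smul_right, inner_add_left, real_inner_smul_left, real_inner_comm G, real_inner_comm G,
    norm_smul, norm_smul, mul_pow, mul_pow, Real.norm_eq_abs, Real.norm_eq_abs, sq_abs, sq_abs, hL]
  field_simp
  ring

theorem agdPotential_succ_le {f : E → ℝ} (hσ : 0 < σ) (hr : 1 ≤ r) (hL : L = σ * r ^ 2)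
    {w x y G x' y' : E} (hy' : y' = x - (1 / L) • G)
    (hx' : x' = y' + ((r - 1) / (r + 1)) • (y' - y))
    (hdesc : f y' ≤ f x - 1 / (2 * L) * ‖G‖ ^ 2)
    (hy : f x + ⟪G, y - x⟫_ℝ + σ / 2 * ‖y - x‖ ^ 2 ≤ f y)
    (hw : f x + ⟪G, w - x⟫_ℝ + σ / 2 * ‖w - x‖ ^ 2 ≤ f w) :
    agdPotential f σ r w x' y' ≤ (1 - 1 / r) * agdPotential f σ r w x y := by
  have hr₀ : 0 < r := one_pos.trans_le hr
  have hv : (1 + r) • x - r • y - w = -((w - x) + r • (y - x)) := by module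
  have hv' : (1 + r) • x' - r • y' - w = -((w - x) + (r - 1) • (y - x) + (1 / (σ * r)) • G) := by
    subst hx' hy' hL
    match_scalars <;> field_simp <;> ring
  have hτ : 0 ≤ 1 - 1 / r := by rw [sub_nonneg, div_le_one hr₀]; exact hr
  have hyτ := mul_le_mul_of_nonneg_left hy hτ
  have hwτ := mul_le_mul_of_nonneg_left hw (one_div_pos.2 hr₀).le
  have hp : 0 ≤ σ / 2 * (r - 1) * ‖y - x‖ ^ 2 := by
    have : 0 ≤ r - 1 := by linarith
    positivity
  have hp' : 0 ≤ (1 - 1 / r) * (σ / 2 * ‖y - x‖ ^ 2) := mul_nonneg hτ (by positivity)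
  unfold agdPotential
  rw [hv, hv', norm_neg, norm_neg, half_norm_sq_agd_step_eq hσ hr₀ hL]
  linarith

end Potential

theorem agd_slow_progress_yields_nonconvexity_witness_general
    {d : ℕ} (f : EuclideanSpace ℝ (Fin d) → ℝ)
    (g : EuclideanSpace ℝ (Fin d) → EuclideanSpace ℝ (Fin d))
    (L σ : ℝ) (hσ : 0 < σ) (hσL : σ ≤ L)
    (hgrad : ∀ x, HasGradientAt f (g x) x)
    (hlip : ∀ x y, ‖g x - g y‖ ≤ L * ‖x - y‖)
    (κ ω : ℝ) (hκ : κ = L / σ)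
    (hω : ω = (Real.sqrt κ - 1) / (Real.sqrt κ + 1))
    (x y : ℕ → EuclideanSpace ℝ (Fin d))
    (hx0 : x 0 = y 0)
    (hy : ∀ t : ℕ, y (t + 1) = x t - (1 / L) • g (x t))
    (hx : ∀ t : ℕ, x (t + 1) = y (t + 1) + ω • (y (t + 1) - y t))
    (w : EuclideanSpace ℝ (Fin d)) (t : ℕ)
    (hslow : f (y t) - f w > (1 - 1 / Real.sqrt κ) ^ t *
      (f (y 0) - f w + σ / 2 * ‖w - y 0‖ ^ 2)) :
    ∃ s, s < t ∧ ∃ u ∈ ({y s, w} : Set (EuclideanSpace ℝ (Fin d))),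
      f u < f (x s) + ⟪g (x s), u - x s⟫_ℝ + σ / 2 * ‖u - x s‖ ^ 2 := by
  by_contra! hconvex
  set r := Real.sqrt κ
  have hr : 1 ≤ r := Real.one_le_sqrt.2 (by rw [hκ, one_le_div hσ]; exact hσL)
  have hL : L = σ * r ^ 2 := by
    rw [Real.sq_sqrt (by rw [hκ]; exact div_nonneg (hσ.le.trans hσL) hσ.le), hκ]
    field_simp
  have hstep : ∀ k < t, agdPotential f σ r w (x (k + 1)) (y (k + 1)) ≤
      (1 - 1 / r) * agdPotential f σ r w (x k) (y k) := fun k hk =>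
    agdPotential_succ_le hσ hr hL (hy k) (hω ▸ hx k)
      (hy k ▸ gradient_step_le hgrad hlip (x k))
      (hconvex k hk (y k) (by simp)) (hconvex k hk w (by simp))
  have hdecay := le_geom (u := fun k => agdPotential f σ r w (x k) (y k))
    (sub_nonneg.2 (div_le_one_of_le₀ hr (zero_le_one.trans hr))) t hstep
  have hstart : agdPotential f σ r w (x 0) (y 0) = f (y 0) - f w + σ / 2 * ‖w - y 0‖ ^ 2 := by
    rw [agdPotential, hx0, norm_sub_rev]
    congr 4
    module
  have hend : f (y t) - f w ≤ agdPotential f σ r w (x t) (y t) :=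
    le_add_of_nonneg_right (by positivity)
  rw [hstart] at hdecay
  linarith

/-- If AGD fails to make the progress guaranteed for σ-strongly convex functions, then
some pair (u, x_s) with u ∈ {y_s, w} witnesses that f is not σ-strongly convex. -/
theorem agd_slow_progress_yields_nonconvexity_witness
    {d : ℕ} (f : EuclideanSpace ℝ (Fin d) → ℝ)
    (g : EuclideanSpace ℝ (Fin d) → EuclideanSpace ℝ (Fin d))
    (L σ : ℝ) (hσ : 0 < σ) (hσL : σ ≤ L)
    (hgrad : ∀ x, HasGradientAt f (g x) x)
    (hlip : ∀ x y, ‖g x - g y‖ ≤ L * ‖x - y‖)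
    (κ ω : ℝ) (hκ : κ = L / σ)
    (hω : ω = (Real.sqrt κ - 1) / (Real.sqrt κ + 1))
    (x y : ℕ → EuclideanSpace ℝ (Fin d))
    (hx0 : x 0 = y 0)
    (hy : ∀ t : ℕ, y (t + 1) = x t - (1 / L) • g (x t))
    (hx : ∀ t : ℕ, x (t + 1) = y (t + 1) + ω • (y (t + 1) - y t))
    (w : EuclideanSpace ℝ (Fin d)) (t : ℕ) (ht : 1 ≤ t)
    (hslow : f (y t) - f w > (1 - 1 / Real.sqrt κ) ^ t *
      (f (y 0) - f w + σ / 2 * ‖w - y 0‖ ^ 2)) :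
    ∃ s, s < t ∧ ∃ u ∈ ({y s, w} : Set (EuclideanSpace ℝ (Fin d))),
      f u < f (x s) + ⟪g (x s), u - x s⟫_ℝ + σ / 2 * ‖u - x s‖ ^ 2 :=
  agd_slow_progress_yields_nonconvexity_witness_general f g L σ hσ hσL hgrad hlip κ ω hκ hω x y hx0
    hy hx w t hslow
end

section
/- Let f : ℝ^d → ℝ be twice differentiable with ρ-Lipschitz continuous Hessian, let α > 0, let u ∈ ℝ^d, and let δ be a unit vector with δᵀ∇²f(u)δ ≤ −α/2. Then for every 0 < η ≤ α/ρ, min{f(u + ηδ), f(u − ηδ)} ≤ f(u) − αη²/12. -/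
open scoped InnerProductSpace

/-!
Along a line `t ↦ u + t • v`, Lipschitz continuity of the Hessian says that the second
derivative `⟪v, ∇²f(u + t • v) v⟫` exceeds its value at `t = 0` by at most `ρ ‖v‖³ t`.
Comparing derivatives twice turns this into the cubic Taylor bound
`f (u + η • v) ≤ f u + η ⟪v, ∇f u⟫ + η²/2 ⟪v, ∇²f(u) v⟫ + ρ ‖v‖³ η³/6`.
For `v = ±δ` the first-order terms have opposite signs, so the average of `f (u ± η • δ)` is at
most `f u - α η²/4 + ρ η³/6 ≤ f u - α η²/12`, using `ρ η ≤ α`.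
-/

open Set

theorem le_of_hasDerivAt_le_on_Icc {φ φ' B B' : ℝ → ℝ} {η : ℝ}
    (hφ : ∀ t, HasDerivAt φ (φ' t) t) (hB : ∀ t, HasDerivAt B (B' t) t)
    (h0 : φ 0 ≤ B 0) (hle : ∀ t ∈ Icc 0 η, φ' t ≤ B' t) :
    ∀ t ∈ Icc 0 η, φ t ≤ B t :=
  image_le_of_deriv_right_le_deriv_boundary
    (fun t _ => (hφ t).continuousAt.continuousWithinAt) (fun t _ => (hφ t).hasDerivWithinAt)
    h0 (fun t _ => (hB t).continuousAt.continuousWithinAt) (fun t _ => (hB t).hasDerivWithinAt)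
    (fun t ht => hle t (Ico_subset_Icc_self ht))

theorem le_taylor_two_add_cube_of_deriv2_le {φ φ' φ'' : ℝ → ℝ} {ρ η : ℝ}
    (hφ : ∀ t, HasDerivAt φ (φ' t) t) (hφ' : ∀ t, HasDerivAt φ' (φ'' t) t)
    (hφ'' : ∀ t ∈ Icc 0 η, φ'' t ≤ φ'' 0 + ρ * t) (hη : 0 ≤ η) :
    φ η ≤ φ 0 + η * φ' 0 + η ^ 2 / 2 * φ'' 0 + ρ * η ^ 3 / 6 := by
  have hderiv : ∀ t ∈ Icc 0 η, φ' t ≤ φ' 0 + t * φ'' 0 + ρ * t ^ 2 / 2 := by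
    refine le_of_hasDerivAt_le_on_Icc hφ' (fun t => ?_) (by simp) hφ''
    have := (((hasDerivAt_id' t).mul_const (φ'' 0)).const_add (φ' 0)).add
      (((hasDerivAt_pow 2 t).const_mul ρ).div_const 2)
    exact this.congr_deriv (by norm_num; ring)
  refine le_of_hasDerivAt_le_on_Icc hφ
    (B := fun t => φ 0 + t * φ' 0 + t ^ 2 / 2 * φ'' 0 + ρ * t ^ 3 / 6) (fun t => ?_)
    (by simp) hderiv η (right_mem_Icc.2 hη)
  have := ((((hasDerivAt_id' t).mul_const (φ' 0)).const_add (φ 0)).add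
      (((hasDerivAt_pow 2 t).div_const 2).mul_const (φ'' 0))).add
    (((hasDerivAt_pow 3 t).const_mul ρ).div_const 6)
  exact this.congr_deriv (by norm_num; ring)

section InnerProductSpace

variable {E : Type*} [NormedAddCommGroup E] [InnerProductSpace ℝ E]

theorem hasDerivAt_add_smul (u v : E) (t : ℝ) : HasDerivAt (fun s : ℝ => u + s • v) v t := by
  simpa using ((hasDerivAt_id t).smul_const v).const_add u

theorem real_inner_apply_le_add_norm_sub_mul_sq (A B : E →L[ℝ] E) (v : E) :
    ⟪v, A v⟫_ℝ ≤ ⟪v, B v⟫_ℝ + ‖A - B‖ * ‖v‖ ^ 2 := by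
  have h : ⟪v, A v⟫_ℝ - ⟪v, B v⟫_ℝ ≤ ‖A - B‖ * ‖v‖ ^ 2 :=
    calc ⟪v, A v⟫_ℝ - ⟪v, B v⟫_ℝ = ⟪v, (A - B) v⟫_ℝ := by
          rw [sub_apply, inner_sub_right]
      _ ≤ ‖v‖ * ‖(A - B) v‖ := real_inner_le_norm _ _
      _ ≤ ‖v‖ * (‖A - B‖ * ‖v‖) := by gcongr; exact (A - B).le_opNorm v
      _ = ‖A - B‖ * ‖v‖ ^ 2 := by ring
  linarith

theorem HasFDerivAt.hasDerivAt_inner_comp_line {g : E → E} {H : E →L[ℝ] E} {u v : E} {t : ℝ}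
    (h : HasFDerivAt g H (u + t • v)) :
    HasDerivAt (fun s : ℝ => ⟪v, g (u + s • v)⟫_ℝ) ⟪v, H v⟫_ℝ t := by
  exact ((innerSL ℝ v).hasFDerivAt.comp _ h).comp_hasDerivAt t (hasDerivAt_add_smul u v t)

variable [CompleteSpace E]

theorem HasGradientAt.hasDerivAt_comp_line {f : E → ℝ} {g' u v : E} {t : ℝ}
    (h : HasGradientAt f g' (u + t • v)) :
    HasDerivAt (fun s : ℝ => f (u + s • v)) ⟪v, g'⟫_ℝ t :=
  (h.hasFDerivAt.comp_hasDerivAt t (hasDerivAt_add_smul u v t)).congr_deriv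
    (by rw [InnerProductSpace.toDual_apply_apply, real_inner_comm])

theorem le_taylor_two_add_cube_of_hessian_lipschitz {f : E → ℝ} {g : E → E}
    {hess : E → E →L[ℝ] E} {ρ : ℝ} {u : E} (hgrad : ∀ x, HasGradientAt f (g x) x)
    (hhess : ∀ x, HasFDerivAt g (hess x) x) (hlip : ∀ x, ‖hess x - hess u‖ ≤ ρ * ‖x - u‖)
    (v : E) {η : ℝ} (hη : 0 ≤ η) :
    f (u + η • v) ≤
      f u + η * ⟪v, g u⟫_ℝ + η ^ 2 / 2 * ⟪v, hess u v⟫_ℝ + ρ * ‖v‖ ^ 3 * η ^ 3 / 6 := by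
  have hcurv : ∀ t ∈ Icc 0 η,
      ⟪v, hess (u + t • v) v⟫_ℝ ≤ ⟪v, hess (u + (0 : ℝ) • v) v⟫_ℝ + ρ * ‖v‖ ^ 3 * t := by
    intro t ⟨ht, _⟩
    have hdist : ‖u + t • v - u‖ = t * ‖v‖ := by
      rw [add_sub_cancel_left, norm_smul, Real.norm_of_nonneg ht]
    calc ⟪v, hess (u + t • v) v⟫_ℝ
        ≤ ⟪v, hess u v⟫_ℝ + ‖hess (u + t • v) - hess u‖ * ‖v‖ ^ 2 :=
          real_inner_apply_le_add_norm_sub_mul_sq _ _ v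
      _ ≤ ⟪v, hess u v⟫_ℝ + ρ * (t * ‖v‖) * ‖v‖ ^ 2 := by
          gcongr; exact hdist ▸ hlip (u + t • v)
      _ = ⟪v, hess (u + (0 : ℝ) • v) v⟫_ℝ + ρ * ‖v‖ ^ 3 * t := by
          rw [zero_smul, add_zero]; ring
  simpa using le_taylor_two_add_cube_of_deriv2_le (fun t => (hgrad _).hasDerivAt_comp_line)
    (fun t => (hhess _).hasDerivAt_inner_comp_line) hcurv hη

end InnerProductSpace

theorem negative_curvature_step_progress_general
    {d : ℕ} (f : EuclideanSpace ℝ (Fin d) → ℝ)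
    (g : EuclideanSpace ℝ (Fin d) → EuclideanSpace ℝ (Fin d))
    (hess : EuclideanSpace ℝ (Fin d) →
      (EuclideanSpace ℝ (Fin d) →L[ℝ] EuclideanSpace ℝ (Fin d)))
    (ρ : ℝ)
    (hgrad : ∀ x, HasGradientAt f (g x) x)
    (hhess : ∀ x, HasFDerivAt g (hess x) x)
    (hhlip : ∀ x y, ‖hess x - hess y‖ ≤ ρ * ‖x - y‖)
    (α : ℝ) (hα : 0 < α)
    (u δ : EuclideanSpace ℝ (Fin d)) (hδ : ‖δ‖ = 1)
    (hcurv : ⟪δ, hess u δ⟫_ℝ ≤ -α / 2) :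
    ∀ η : ℝ, 0 < η → η ≤ α / ρ →
      min (f (u + η • δ)) (f (u - η • δ)) ≤ f u - α * η ^ 2 / 12 := by
  intro η hη hηα
  have hρ : 0 < ρ := (div_pos_iff_of_pos_left hα).1 (hη.trans_le hηα)
  have hcube : ρ * η ^ 3 ≤ α * η ^ 2 := by
    rw [le_div_iff₀ hρ] at hηα
    nlinarith [sq_nonneg η]
  have hquad : η ^ 2 * ⟪δ, hess u δ⟫_ℝ ≤ η ^ 2 * (-α / 2) :=
    mul_le_mul_of_nonneg_left hcurv (sq_nonneg η)
  have hplus :=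
    le_taylor_two_add_cube_of_hessian_lipschitz hgrad hhess (fun x => hhlip x u) δ hη.le
  have hminus := le_taylor_two_add_cube_of_hessian_lipschitz hgrad hhess (fun x => hhlip x u)
    (-δ) hη.le
  simp only [smul_neg, ← sub_eq_add_neg, inner_neg_left, inner_neg_right, map_neg, neg_neg,
    norm_neg] at hminus
  rw [hδ, one_pow, mul_one] at hplus hminus
  linarith [min_le_left (f (u + η • δ)) (f (u - η • δ)),
    min_le_right (f (u + η • δ)) (f (u - η • δ))]

/-- Negative curvature exploitation: if δᵀ∇²f(u)δ ≤ −α/2 for a unit vector δ, then a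
step of size η ≤ α/ρ in the direction ±δ decreases f by at least αη²/12. -/
theorem negative_curvature_step_progress
    {d : ℕ} (f : EuclideanSpace ℝ (Fin d) → ℝ)
    (g : EuclideanSpace ℝ (Fin d) → EuclideanSpace ℝ (Fin d))
    (hess : EuclideanSpace ℝ (Fin d) →
      (EuclideanSpace ℝ (Fin d) →L[ℝ] EuclideanSpace ℝ (Fin d)))
    (ρ : ℝ) (hρ : 0 < ρ)
    (hgrad : ∀ x, HasGradientAt f (g x) x)
    (hhess : ∀ x, HasFDerivAt g (hess x) x)
    (hhlip : ∀ x y, ‖hess x - hess y‖ ≤ ρ * ‖x - y‖)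
    (α : ℝ) (hα : 0 < α)
    (u δ : EuclideanSpace ℝ (Fin d)) (hδ : ‖δ‖ = 1)
    (hcurv : ⟪δ, hess u δ⟫_ℝ ≤ -α / 2) :
    ∀ η : ℝ, 0 < η → η ≤ α / ρ →
      min (f (u + η • δ)) (f (u - η • δ)) ≤ f u - α * η ^ 2 / 12 :=
  negative_curvature_step_progress_general f g hess ρ hgrad hhess hhlip α hα u δ hδ hcurv
end
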